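/- arXiv:2106.13597 — 2 statements merged into one kernel-verified Lean document; each statement's English description precedes it below -/
import Mathlib

section
/- Suppose P̄(X,Y,Z,W) = 0 for all X,Y,Z,W ∈ V, with a ≠ 0, b ≠ 0 and a + (n−1)b ≠ 0. Then the Ricci tensor satisfies S(Y,Z) = (r/n) g(Y,Z) for all Y,Z ∈ V; that is, a pseudo-projectively flat algebraic curvature tensor is Einstein. -/
open scoped RealInnerProductSpace

/-!
Contracting `P̄(eᵢ, Y, Z, eᵢ)` over an orthonormal basis turns the `a R̄` term into `a S(Y, Z)`,
the Ricci term into `b (n - 1) S(Y, Z)` and the metric term into `(r/n) (a + (n - 1) b) g(Y, Z)`,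
so that the contraction equals `(a + (n - 1) b) (S(Y, Z) - (r/n) g(Y, Z))`. Flatness makes it
vanish, and `a + (n - 1) b ≠ 0` leaves the Einstein condition.
-/

section

variable {V : Type*} [NormedAddCommGroup V] [InnerProductSpace ℝ V]

noncomputable def pseudoProjective (n : ℕ) (a b r : ℝ) (R : V → V → V → V → ℝ) (S : V → V → ℝ)
    (X Y Z W : V) : ℝ :=
  a * R X Y Z W + b * (S Y Z * ⟪X, W⟫ - S X Z * ⟪Y, W⟫)
    - (r / n) * (a / ((n : ℝ) - 1) + b) * (⟪Y, Z⟫ * ⟪X, W⟫ - ⟪X, Z⟫ * ⟪Y, W⟫)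

theorem isLinearMap_of_map_smul_add {M : Type*} [AddCommGroup M] [Module ℝ M] {f : M → ℝ}
    (hf : ∀ (c : ℝ) (x y : M), f (c • x + y) = c * f x + f y) : IsLinearMap ℝ f := by
  have hzero : f 0 = 0 := by linarith [by simpa using hf 1 0 0]
  exact ⟨fun x y => by simpa using hf 1 x y, fun c x => by simpa [hzero] using hf c x 0⟩

theorem isLinearMap_sum_apply_second {ι : Type*} [Fintype ι] (R : V → V → V → V → ℝ)
    (hR : ∀ (c : ℝ) (X Y Y' Z W : V), R X (c • Y + Y') Z W = c * R X Y Z W + R X Y' Z W)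
    (e : ι → V) (Z : V) : IsLinearMap ℝ fun Y => ∑ i, R (e i) Y Z (e i) :=
  isLinearMap_of_map_smul_add fun c Y Y' => by
    simp only [hR, Finset.sum_add_distrib, Finset.mul_sum]

namespace OrthonormalBasis

variable {ι : Type*} [Fintype ι] (e : OrthonormalBasis ι ℝ V)

theorem sum_apply_mul_inner (f : V →ₗ[ℝ] ℝ) (x : V) : ∑ i, f (e i) * ⟪x, e i⟫ = f x := by
  conv_rhs => rw [← e.sum_repr' x]
  simp only [map_sum, map_smul, smul_eq_mul, real_inner_comm, mul_comm]

theorem sum_inner_self : ∑ i, ⟪e i, e i⟫ = Fintype.card ι := by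
  simp

theorem sum_pseudoProjective (hcard : Fintype.card ι ≠ 1) (a b r : ℝ)
    (R : V → V → V → V → ℝ) (S : V → V → ℝ) (hS : ∀ Y Z, ∑ i, R (e i) Y Z (e i) = S Y Z)
    (hSlin : ∀ Z, IsLinearMap ℝ fun Y => S Y Z) (Y Z : V) :
    ∑ i, pseudoProjective (Fintype.card ι) a b r R S (e i) Y Z (e i)
      = (a + ((Fintype.card ι : ℝ) - 1) * b) * (S Y Z - r / Fintype.card ι * ⟪Y, Z⟫) := by
  have hricci : ∑ i, S (e i) Z * ⟪Y, e i⟫ = S Y Z := e.sum_apply_mul_inner (hSlin Z).mk' Y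
  have hmetric : ∑ i, ⟪e i, Z⟫ * ⟪Y, e i⟫ = ⟪Y, Z⟫ := by
    simpa only [mul_comm] using e.sum_inner_mul_inner Y Z
  have hn : (Fintype.card ι : ℝ) - 1 ≠ 0 := sub_ne_zero.mpr (by exact_mod_cast hcard)
  simp only [pseudoProjective, Finset.sum_sub_distrib, Finset.sum_add_distrib, ← Finset.mul_sum,
    hS, hricci, hmetric, sum_inner_self]
  field_simp

end OrthonormalBasis

end

theorem stmt3_general
    {V : Type*} [NormedAddCommGroup V] [InnerProductSpace ℝ V]
    (n : ℕ) (hn : 3 < n)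
    (e : Module.Basis (Fin n) ℝ V) (he : Orthonormal ℝ e)
    (Rb : V → V → V → V → ℝ)
    (hlin2 : ∀ (c : ℝ) (X Y Y' Z W : V),
      Rb X (c • Y + Y') Z W = c * Rb X Y Z W + Rb X Y' Z W)
    (S : V → V → ℝ) (hS : ∀ Y Z : V, S Y Z = ∑ i, Rb (e i) Y Z (e i))
    (r : ℝ)
    (a b : ℝ)
    (Pb : V → V → V → V → ℝ)
    (hP : ∀ X Y Z W : V, Pb X Y Z W =
      a * Rb X Y Z W
      + b * (S Y Z * ⟪X, W⟫ - S X Z * ⟪Y, W⟫)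
      - (r / n) * (a / ((n : ℝ) - 1) + b)
        * (⟪Y, Z⟫ * ⟪X, W⟫ - ⟪X, Z⟫ * ⟪Y, W⟫))
    (hab : a + ((n : ℝ) - 1) * b ≠ 0)
    (hflat : ∀ X Y Z W : V, Pb X Y Z W = 0) :
    ∀ Y Z : V, S Y Z = (r / n) * ⟪Y, Z⟫ := by
  intro Y Z
  have hSlin : ∀ Z, IsLinearMap ℝ fun Y => S Y Z := fun Z => by
    simpa only [hS] using isLinearMap_sum_apply_second Rb hlin2 e Z
  have hcontract := (e.toOrthonormalBasis he).sum_pseudoProjective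
    (by rw [Fintype.card_fin]; omega) a b r Rb S (by simp [hS]) hSlin Y Z
  have hvanish : ∑ i, pseudoProjective n a b r Rb S (e i) Y Z (e i) = 0 :=
    Finset.sum_eq_zero fun i _ => (hP _ _ _ _).symm.trans (hflat _ _ _ _)
  simp only [Module.Basis.coe_toOrthonormalBasis, Fintype.card_fin, hvanish] at hcontract
  exact sub_eq_zero.mp ((mul_eq_zero.mp hcontract.symm).resolve_left hab)

theorem stmt3
    {V : Type*} [NormedAddCommGroup V] [InnerProductSpace ℝ V]
    (n : ℕ) (hn : 3 < n)
    (e : Module.Basis (Fin n) ℝ V) (he : Orthonormal ℝ e)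
    (Rb : V → V → V → V → ℝ)
    (hlin1 : ∀ (c : ℝ) (X X' Y Z W : V),
      Rb (c • X + X') Y Z W = c * Rb X Y Z W + Rb X' Y Z W)
    (hlin2 : ∀ (c : ℝ) (X Y Y' Z W : V),
      Rb X (c • Y + Y') Z W = c * Rb X Y Z W + Rb X Y' Z W)
    (hlin3 : ∀ (c : ℝ) (X Y Z Z' W : V),
      Rb X Y (c • Z + Z') W = c * Rb X Y Z W + Rb X Y Z' W)
    (hlin4 : ∀ (c : ℝ) (X Y Z W W' : V),
      Rb X Y Z (c • W + W') = c * Rb X Y Z W + Rb X Y Z W')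
    (hskew1 : ∀ X Y Z W : V, Rb X Y Z W = - Rb Y X Z W)
    (hskew2 : ∀ X Y Z W : V, Rb X Y Z W = - Rb X Y W Z)
    (hpair : ∀ X Y Z W : V, Rb X Y Z W = Rb Z W X Y)
    (S : V → V → ℝ) (hS : ∀ Y Z : V, S Y Z = ∑ i, Rb (e i) Y Z (e i))
    (r : ℝ) (hr : r = ∑ i, S (e i) (e i))
    (a b : ℝ)
    (Pb : V → V → V → V → ℝ)
    (hP : ∀ X Y Z W : V, Pb X Y Z W =
      a * Rb X Y Z W
      + b * (S Y Z * ⟪X, W⟫ - S X Z * ⟪Y, W⟫)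
      - (r / n) * (a / ((n : ℝ) - 1) + b)
        * (⟪Y, Z⟫ * ⟪X, W⟫ - ⟪X, Z⟫ * ⟪Y, W⟫))
    (ha : a ≠ 0) (hb : b ≠ 0) (hab : a + ((n : ℝ) - 1) * b ≠ 0)
    (hflat : ∀ X Y Z W : V, Pb X Y Z W = 0) :
    ∀ Y Z : V, S Y Z = (r / n) * ⟪Y, Z⟫ :=
  stmt3_general n hn e he Rb hlin2 S hS r a b Pb hP hab hflat
end

section
/- Suppose W₂(X,Y,Z,W) = 0 for all X,Y,Z,W ∈ V. Then R̄(X,Y,Z,W) = (r/(n(n−1)))[g(Y,Z)g(X,W) − g(X,Z)g(Y,W)] for all X,Y,Z,W ∈ V; that is, substituting the Einstein condition S = (r/n)g (which follows from W₂-flatness) back into the W₂-flatness relation R̄(X,Y,Z,W) = (1/(n−1))[g(Y,Z)S(X,W) − g(X,Z)S(Y,W)] yields constant sectional-curvature form. -/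
/-!
Contracting the flatness relation `R(X,Y,Z,W) = (⟪Y,Z⟫ S(X,W) - ⟪X,Z⟫ S(Y,W)) / (n - 1)` over `X = W`
gives `S = (r g - S) / (n - 1)`, i.e. the Einstein condition `S = (r / n) g`; substituting it back
into the flatness relation yields the constant-curvature form.
-/

open scoped RealInnerProductSpace

section

variable {V : Type*} [NormedAddCommGroup V] [InnerProductSpace ℝ V] {ι : Type*} [Fintype ι]

theorem isLinearMap_of_map_smul_add_s17 {f : V → ℝ}
    (hf : ∀ (c : ℝ) (Z Z' : V), f (c • Z + Z') = c * f Z + f Z') : IsLinearMap ℝ f := by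
  have h0 : f 0 = 0 := by simpa using hf 1 0 0
  exact ⟨fun x y => by simpa using hf 1 x y, fun c x => by simpa [h0] using hf c x 0⟩

theorem OrthonormalBasis.apply_eq_sum_inner_mul (b : OrthonormalBasis ι ℝ V) {f : V → ℝ}
    (hf : IsLinearMap ℝ f) (Z : V) : f Z = ∑ i, ⟪b i, Z⟫ * f (b i) := by
  let F : V →ₗ[ℝ] ℝ := hf.mk' f
  calc f Z = F (∑ i, ⟪b i, Z⟫ • b i) := by rw [b.sum_repr']; rfl
    _ = ∑ i, ⟪b i, Z⟫ * f (b i) := by simp [F, map_sum]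

theorem one_add_mul_ricci_eq_of_curvature_eq (b : OrthonormalBasis ι ℝ V) (Rb : V → V → V → V → ℝ)
    (S : V → V → ℝ) (hS : ∀ Y Z : V, S Y Z = ∑ i, Rb (b i) Y Z (b i))
    (hSlin : ∀ Y : V, IsLinearMap ℝ (S Y)) (κ : ℝ)
    (hR : ∀ X Y Z W : V, Rb X Y Z W = κ * (⟪Y, Z⟫ * S X W - ⟪X, Z⟫ * S Y W)) (Y Z : V) :
    (1 + κ) * S Y Z = κ * (∑ i, S (b i) (b i)) * ⟪Y, Z⟫ := by
  have hcontr : S Y Z = κ * (⟪Y, Z⟫ * ∑ i, S (b i) (b i) - S Y Z) := by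
    conv_lhs => rw [hS]
    simp only [hR, ← Finset.mul_sum, Finset.sum_sub_distrib]
    rw [← b.apply_eq_sum_inner_mul (hSlin Y) Z, Finset.mul_sum]
  linear_combination hcontr

end

theorem stmt17_general
    {V : Type*} [NormedAddCommGroup V] [InnerProductSpace ℝ V]
    (n : ℕ) (hn : 3 < n)
    (e : Module.Basis (Fin n) ℝ V) (he : Orthonormal ℝ e)
    (Rb : V → V → V → V → ℝ)
    (hlin3 : ∀ (c : ℝ) (X Y Z Z' W : V),
      Rb X Y (c • Z + Z') W = c * Rb X Y Z W + Rb X Y Z' W)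
    (S : V → V → ℝ) (hS : ∀ Y Z : V, S Y Z = ∑ i, Rb (e i) Y Z (e i))
    (r : ℝ) (hr : r = ∑ i, S (e i) (e i))
    (W2 : V → V → V → V → ℝ)
    (hW : ∀ X Y Z W : V, W2 X Y Z W =
      Rb X Y Z W
      + (1 / ((n : ℝ) - 1)) * (⟪X, Z⟫ * S Y W - ⟪Y, Z⟫ * S X W))
    (hflat : ∀ X Y Z W : V, W2 X Y Z W = 0) :
    ∀ X Y Z W : V, Rb X Y Z W =
      (r / ((n : ℝ) * ((n : ℝ) - 1)))
        * (⟪Y, Z⟫ * ⟪X, W⟫ - ⟪X, Z⟫ * ⟪Y, W⟫) := by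
  have hn3 : (3 : ℝ) < n := by exact_mod_cast hn
  have hn1 : (n : ℝ) - 1 ≠ 0 := by linarith
  have hn0 : (n : ℝ) ≠ 0 := by linarith
  let b := e.toOrthonormalBasis he
  have hb : ⇑b = ⇑e := Module.Basis.coe_toOrthonormalBasis e he
  have hR : ∀ X Y Z W : V,
      Rb X Y Z W = 1 / ((n : ℝ) - 1) * (⟪Y, Z⟫ * S X W - ⟪X, Z⟫ * S Y W) := fun X Y Z W => by
    linear_combination hflat X Y Z W - hW X Y Z W
  have hSlin : ∀ Y : V, IsLinearMap ℝ (S Y) := fun Y => isLinearMap_of_map_smul_add_s17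
    fun c Z Z' => by simp only [hS, Finset.mul_sum, ← Finset.sum_add_distrib, hlin3]
  have hEinstein : ∀ Y Z : V, S Y Z = r / n * ⟪Y, Z⟫ := fun Y Z => by
    have h := one_add_mul_ricci_eq_of_curvature_eq b Rb S (hb ▸ hS) hSlin _ hR Y Z
    rw [hb, ← hr] at h
    field_simp at h ⊢
    linear_combination h
  intro X Y Z W
  rw [hR, hEinstein, hEinstein]
  field_simp

theorem stmt17
    {V : Type*} [NormedAddCommGroup V] [InnerProductSpace ℝ V]
    (n : ℕ) (hn : 3 < n)
    (e : Module.Basis (Fin n) ℝ V) (he : Orthonormal ℝ e)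
    (Rb : V → V → V → V → ℝ)
    (hlin1 : ∀ (c : ℝ) (X X' Y Z W : V),
      Rb (c • X + X') Y Z W = c * Rb X Y Z W + Rb X' Y Z W)
    (hlin2 : ∀ (c : ℝ) (X Y Y' Z W : V),
      Rb X (c • Y + Y') Z W = c * Rb X Y Z W + Rb X Y' Z W)
    (hlin3 : ∀ (c : ℝ) (X Y Z Z' W : V),
      Rb X Y (c • Z + Z') W = c * Rb X Y Z W + Rb X Y Z' W)
    (hlin4 : ∀ (c : ℝ) (X Y Z W W' : V),
      Rb X Y Z (c • W + W') = c * Rb X Y Z W + Rb X Y Z W')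
    (hskew1 : ∀ X Y Z W : V, Rb X Y Z W = - Rb Y X Z W)
    (hskew2 : ∀ X Y Z W : V, Rb X Y Z W = - Rb X Y W Z)
    (hpair : ∀ X Y Z W : V, Rb X Y Z W = Rb Z W X Y)
    (S : V → V → ℝ) (hS : ∀ Y Z : V, S Y Z = ∑ i, Rb (e i) Y Z (e i))
    (r : ℝ) (hr : r = ∑ i, S (e i) (e i))
    (W2 : V → V → V → V → ℝ)
    (hW : ∀ X Y Z W : V, W2 X Y Z W =
      Rb X Y Z W
      + (1 / ((n : ℝ) - 1)) * (⟪X, Z⟫ * S Y W - ⟪Y, Z⟫ * S X W))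
    (hflat : ∀ X Y Z W : V, W2 X Y Z W = 0) :
    ∀ X Y Z W : V, Rb X Y Z W =
      (r / ((n : ℝ) * ((n : ℝ) - 1)))
        * (⟪Y, Z⟫ * ⟪X, W⟫ - ⟪X, Z⟫ * ⟪Y, W⟫) :=
  stmt17_general n hn e he Rb hlin3 S hS r hr W2 hW hflat
end
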